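/- Let X be a complex separable Banach space and let T ∈ B(X) be invertible and transitive (T has no nontrivial closed invariant subspace). Let x₀ ∈ X be nonzero, and for k ≥ 1 let 𝔑₋ₖ be the closed linear span of {T^{−n}x₀ : n ≥ k}; write 𝔑 = 𝔑₋₁. If 𝔑 ≠ X, then the sequence (𝔑₋ₖ)_{k≥1} is strictly decreasing (𝔑₋₍ₖ₊₁₎ ⊊ 𝔑₋ₖ for all k ≥ 1) and ⋂_{k≥1} 𝔑₋ₖ = {0}. -/

import Mathlib

/-! Since `T ∘ S = id`, `T` maps `𝔑₋₍ₖ₊₁₎` into `𝔑₋ₖ`. Hence an equality `𝔑₋₍ₖ₊₁₎ = 𝔑₋ₖ` would make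
`𝔑₋ₖ` a closed `T`-invariant subspace, and so would the intersection `⋂ₖ 𝔑₋ₖ`. Both lie in
`𝔑 ≠ X`, so transitivity forces them to be `{0}`; for `𝔑₋ₖ` this contradicts `S^k x₀ ≠ 0`. -/

/-- `𝔑₋ₖ`: the closed linear span of `{S^n x₀ : n ≥ k}` (here `S = T⁻¹`). -/
def closedSpanOrbitFrom {X : Type*} [NormedAddCommGroup X] [NormedSpace ℂ X]
    (S : X →L[ℂ] X) (x₀ : X) (k : ℕ) : Submodule ℂ X :=
  (Submodule.span ℂ {y : X | ∃ n : ℕ, k ≤ n ∧ y = (S ^ n) x₀}).topologicalClosure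

/-- `T` is transitive: it has no nontrivial closed invariant subspace. -/
def IsTransitiveOp {X : Type*} [NormedAddCommGroup X] [NormedSpace ℂ X]
    (T : X →L[ℂ] X) : Prop :=
  ∀ Y : Submodule ℂ X, IsClosed (Y : Set X) → (∀ x ∈ Y, T x ∈ Y) → Y = ⊥ ∨ Y = ⊤

section

variable {X : Type*} [NormedAddCommGroup X] [NormedSpace ℂ X]

theorem IsTransitiveOp.eq_bot_of_le_ne_top {T : X →L[ℂ] X} (htrans : IsTransitiveOp T)
    {Y N : Submodule ℂ X} (hY : IsClosed (Y : Set X)) (hinv : ∀ x ∈ Y, T x ∈ Y) (hYN : Y ≤ N)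
    (hN : N ≠ ⊤) : Y = ⊥ :=
  (htrans Y hY hinv).resolve_right fun hY_top => hN (top_le_iff.mp (hY_top ▸ hYN))

theorem pow_apply_ne_zero_of_injective {S : X →L[ℂ] X} (hS : Function.Injective S) {x : X}
    (hx : x ≠ 0) (n : ℕ) : (S ^ n) x ≠ 0 := by
  rw [pow_apply_eq_iterate, ← iterate_map_zero S n]
  exact (hS.iterate n).ne hx

namespace closedSpanOrbitFrom

variable (S : X →L[ℂ] X) (x₀ : X)

theorem isClosed (k : ℕ) : IsClosed (closedSpanOrbitFrom S x₀ k : Set X) :=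
  Submodule.isClosed_topologicalClosure _

theorem pow_apply_mem (k : ℕ) : (S ^ k) x₀ ∈ closedSpanOrbitFrom S x₀ k :=
  Submodule.le_topologicalClosure _ (Submodule.subset_span ⟨k, le_rfl, rfl⟩)

theorem antitone : Antitone (closedSpanOrbitFrom S x₀) := fun _ _ hkl =>
  Submodule.topologicalClosure_mono <| Submodule.span_mono
    fun _ ⟨n, hn, hy⟩ => ⟨n, hkl.trans hn, hy⟩

theorem apply_mem_of_mem_succ {T : X →L[ℂ] X} (hTS : Function.LeftInverse T S) {k : ℕ} {x : X}
    (hx : x ∈ closedSpanOrbitFrom S x₀ (k + 1)) : T x ∈ closedSpanOrbitFrom S x₀ k := by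
  have hcomap : IsClosed ((closedSpanOrbitFrom S x₀ k).comap (T : X →ₗ[ℂ] X) : Set X) :=
    (isClosed S x₀ k).preimage T.continuous
  refine Submodule.topologicalClosure_minimal _ ?_ hcomap hx
  rw [Submodule.span_le]
  rintro _ ⟨n, hn, rfl⟩
  obtain ⟨m, rfl⟩ : ∃ m, n = m + 1 := ⟨n - 1, by omega⟩
  have hT : T ((S ^ (m + 1)) x₀) = (S ^ m) x₀ := by
    rw [pow_succ', mul_apply_eq_comp, hTS]
  simpa only [SetLike.mem_coe, Submodule.mem_comap, ContinuousLinearMap.coe_coe, hT]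
    using antitone S x₀ (by omega) (pow_apply_mem S x₀ m)

end closedSpanOrbitFrom

end

theorem closedSpanOrbit_strict_decreasing_and_inter_bot_general
    (X : Type*) [NormedAddCommGroup X] [NormedSpace ℂ X]
    (T S : X →L[ℂ] X)
    (hTS : T.comp S = ContinuousLinearMap.id ℂ X)
    (htrans : IsTransitiveOp T)
    (x₀ : X) (hx₀ : x₀ ≠ 0)
    (hN : closedSpanOrbitFrom S x₀ 1 ≠ ⊤) :
    (∀ k : ℕ, 1 ≤ k → closedSpanOrbitFrom S x₀ (k + 1) < closedSpanOrbitFrom S x₀ k) ∧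
    (⨅ k : ℕ, closedSpanOrbitFrom S x₀ (k + 1)) = ⊥ := by
  have hTS' : Function.LeftInverse T S := fun y => DFunLike.congr_fun hTS y
  have hTN : ∀ k, ∀ x ∈ closedSpanOrbitFrom S x₀ (k + 1), T x ∈ closedSpanOrbitFrom S x₀ k :=
    fun _ _ => closedSpanOrbitFrom.apply_mem_of_mem_succ S x₀ hTS'
  refine ⟨fun k hk => (closedSpanOrbitFrom.antitone S x₀ k.le_succ).lt_of_ne fun heq => ?_, ?_⟩
  · have hNk : closedSpanOrbitFrom S x₀ k = ⊥ :=
      htrans.eq_bot_of_le_ne_top (closedSpanOrbitFrom.isClosed S x₀ k)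
        (fun x hx => hTN k x (heq.ge hx)) (closedSpanOrbitFrom.antitone S x₀ hk) hN
    have hmem := closedSpanOrbitFrom.pow_apply_mem S x₀ k
    rw [hNk, Submodule.mem_bot] at hmem
    exact pow_apply_ne_zero_of_injective hTS'.injective hx₀ k hmem
  · refine htrans.eq_bot_of_le_ne_top ?_ ?_ (iInf_le _ 0) hN
    · rw [Submodule.coe_iInf]
      exact isClosed_iInter fun k => closedSpanOrbitFrom.isClosed S x₀ (k + 1)
    · simp only [Submodule.mem_iInf]
      exact fun x hx k => hTN (k + 1) x (hx (k + 1))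

/-- Let `X` be a complex separable Banach space, `T ∈ B(X)` invertible
(with inverse `S`) and transitive, `x₀ ≠ 0` with `𝔑 = 𝔑₋₁ ≠ X`. Then `(𝔑₋ₖ)_{k≥1}` is
strictly decreasing and `⋂_{k≥1} 𝔑₋ₖ = {0}`. -/
theorem closedSpanOrbit_strict_decreasing_and_inter_bot
    (X : Type*) [NormedAddCommGroup X] [NormedSpace ℂ X] [CompleteSpace X]
    [TopologicalSpace.SeparableSpace X]
    (T S : X →L[ℂ] X)
    (hTS : T.comp S = ContinuousLinearMap.id ℂ X)
    (hST : S.comp T = ContinuousLinearMap.id ℂ X)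
    (htrans : IsTransitiveOp T)
    (x₀ : X) (hx₀ : x₀ ≠ 0)
    (hN : closedSpanOrbitFrom S x₀ 1 ≠ ⊤) :
    (∀ k : ℕ, 1 ≤ k → closedSpanOrbitFrom S x₀ (k + 1) < closedSpanOrbitFrom S x₀ k) ∧
    (⨅ k : ℕ, closedSpanOrbitFrom S x₀ (k + 1)) = ⊥ :=
  closedSpanOrbit_strict_decreasing_and_inter_bot_general X T S hTS htrans x₀ hx₀ hN
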